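/- Let I ⊆ ℝ be an open interval, F : I → ℝ a function, and let f, g : I → ℝ be three times differentiable functions with f' and g' nonvanishing on I, satisfying S(f)(s) = F(s) = S(g)(s) for all s ∈ I. Then there exist real numbers a, b, c, d with ad − bc ≠ 0 such that c·f(s) + d ≠ 0 and g(s) = (a·f(s) + b)/(c·f(s) + d) for all s ∈ I; that is, two solutions of the same Schwarzian equation differ by post-composition with a homographic transformation. -/

import Mathlib

/-!
With `q = F / 2`, both `u = |f'|^(-1/2)` and `f * u` solve the linear equation `y'' + q y = 0`,
and their Wronskian is `f' u² = ±1`; so `f` is the ratio of two independent solutions, and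
likewise for `g`. Wronskians of solutions are constant, so by Cramer's rule the two solutions
coming from `g` are constant linear combinations of those coming from `f`. Hence `g` is a
homography of `f`, whose determinant is, by a Plücker relation, the product of the two
(nonzero) Wronskians.
-/

/-- The Schwarzian derivative `S(f) = f'''/f' - (3/2)(f''/f')²`. -/
noncomputable def schwarzian (f : ℝ → ℝ) (s : ℝ) : ℝ :=
  deriv (deriv (deriv f)) s / deriv f s - 3 / 2 * (deriv (deriv f) s / deriv f s) ^ 2

def IsHillSolution (I : Set ℝ) (q y y' : ℝ → ℝ) : Prop :=
  ∀ s ∈ I, HasDerivAt y (y' s) s ∧ HasDerivAt y' (-(q s * y s)) s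

def wronskian (y y' z z' : ℝ → ℝ) (s : ℝ) : ℝ := y s * z' s - y' s * z s

lemma wronskian_mul_left (y y' f : ℝ → ℝ) (s : ℝ) :
    wronskian y y' (fun t => f t * y t) (fun t => deriv f t * y t + f t * y' t) s =
      deriv f s * y s ^ 2 := by
  simp only [wronskian]
  ring

namespace IsHillSolution

variable {I : Set ℝ} {q u u' v v' B B' D D' : ℝ → ℝ}

lemma hasDerivAt_wronskian (hu : IsHillSolution I q u u') (hv : IsHillSolution I q v v')
    {s : ℝ} (hs : s ∈ I) : HasDerivAt (wronskian u u' v v') 0 s := by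
  obtain ⟨hu1, hu2⟩ := hu s hs
  obtain ⟨hv1, hv2⟩ := hv s hs
  refine ((hu1.fun_mul hv2).fun_sub (hu2.fun_mul hv1)).congr_deriv ?_
  ring

lemma wronskian_eq (hI : IsOpen I) (hI' : IsPreconnected I) (hu : IsHillSolution I q u u')
    (hv : IsHillSolution I q v v') {s t : ℝ} (hs : s ∈ I) (ht : t ∈ I) :
    wronskian u u' v v' s = wronskian u u' v v' t :=
  hI.is_const_of_deriv_eq_zero hI'
    (fun _ hx => (hu.hasDerivAt_wronskian hv hx).differentiableAt.differentiableWithinAt)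
    (fun _ hx => (hu.hasDerivAt_wronskian hv hx).deriv) hs ht

/-- Cramer's rule, with constant coefficients because Wronskians of solutions are constant. -/
lemma wronskian_mul_eq_add (hI : IsOpen I) (hI' : IsPreconnected I)
    (hu : IsHillSolution I q u u') (hB : IsHillSolution I q B B') (hv : IsHillSolution I q v v')
    {s₀ s : ℝ} (hs₀ : s₀ ∈ I) (hs : s ∈ I) :
    wronskian u u' B B' s₀ * v s =
      wronskian v v' B B' s₀ * u s + wronskian u u' v v' s₀ * B s := by
  rw [hu.wronskian_eq hI hI' hB hs₀ hs, hv.wronskian_eq hI hI' hB hs₀ hs,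
    hu.wronskian_eq hI hI' hv hs₀ hs]
  simp only [wronskian]
  ring

lemma exists_div_eq_homography (hI : IsOpen I) (hI' : IsPreconnected I)
    (hu : IsHillSolution I q u u') (hB : IsHillSolution I q B B')
    (hv : IsHillSolution I q v v') (hD : IsHillSolution I q D D')
    (hu0 : ∀ s ∈ I, u s ≠ 0) (hv0 : ∀ s ∈ I, v s ≠ 0)
    (huB : ∀ s ∈ I, wronskian u u' B B' s ≠ 0) (hvD : ∀ s ∈ I, wronskian v v' D D' s ≠ 0) :
    ∃ a b c d : ℝ, a * d - b * c ≠ 0 ∧ ∀ s ∈ I,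
      c * (B s / u s) + d ≠ 0 ∧ D s / v s = (a * (B s / u s) + b) / (c * (B s / u s) + d) := by
  rcases I.eq_empty_or_nonempty with rfl | ⟨s₀, hs₀⟩
  · exact ⟨1, 0, 0, 1, by norm_num, by simp⟩
  refine ⟨wronskian u u' D D' s₀, wronskian D D' B B' s₀, wronskian u u' v v' s₀,
    wronskian v v' B B' s₀, ?_, fun s hs => ?_⟩
  · have plucker : wronskian u u' D D' s₀ * wronskian v v' B B' s₀ -
        wronskian D D' B B' s₀ * wronskian u u' v v' s₀ =
          wronskian u u' B B' s₀ * wronskian v v' D D' s₀ := by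
      simp only [wronskian]
      ring
    rw [plucker]
    exact mul_ne_zero (huB s₀ hs₀) (hvD s₀ hs₀)
  have hden : wronskian u u' v v' s₀ * (B s / u s) + wronskian v v' B B' s₀ =
      wronskian u u' B B' s₀ * v s / u s := by
    rw [hu.wronskian_mul_eq_add hI hI' hB hv hs₀ hs]
    field_simp [hu0 s hs]
    ring
  have hnum : wronskian u u' D D' s₀ * (B s / u s) + wronskian D D' B B' s₀ =
      wronskian u u' B B' s₀ * D s / u s := by
    rw [hu.wronskian_mul_eq_add hI hI' hB hD hs₀ hs]
    field_simp [hu0 s hs]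
    ring
  rw [hden, hnum]
  refine ⟨div_ne_zero (mul_ne_zero (huB s₀ hs₀) (hv0 s hs)) (hu0 s hs), ?_⟩
  field_simp [huB s₀ hs₀, hu0 s hs, hv0 s hs]

end IsHillSolution

/-- `|f'|^(-1/2)`, written through `f' ^ 2` so that no sign of `f'` has to be fixed. -/
noncomputable def invSqrtAbsDeriv (f : ℝ → ℝ) (t : ℝ) : ℝ := (deriv f t ^ 2) ^ (-(1 / 4 : ℝ))

section

variable {I : Set ℝ} {q f : ℝ → ℝ}

lemma invSqrtAbsDeriv_pos {s : ℝ} (hf' : deriv f s ≠ 0) : 0 < invSqrtAbsDeriv f s :=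
  Real.rpow_pos_of_pos (by positivity) _

lemma hasDerivAt_invSqrtAbsDeriv {s : ℝ} (hf2 : DifferentiableAt ℝ (deriv f) s)
    (hf' : deriv f s ≠ 0) :
    HasDerivAt (invSqrtAbsDeriv f)
      (-(deriv (deriv f) s / (2 * deriv f s)) * invSqrtAbsDeriv f s) s := by
  have hsq : 0 < deriv f s ^ 2 := by positivity
  have hpow : HasDerivAt (fun t => deriv f t ^ 2) (2 * deriv f s * deriv (deriv f) s) s := by
    simpa [mul_comm] using hf2.hasDerivAt.fun_pow 2
  refine (hpow.rpow_const (p := -(1 / 4 : ℝ)) (Or.inl hsq.ne')).congr_deriv ?_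
  rw [Real.rpow_sub hsq, Real.rpow_one, invSqrtAbsDeriv]
  field_simp
  ring

lemma hasDerivAt_deriv_invSqrtAbsDeriv {s : ℝ} (hf2 : DifferentiableAt ℝ (deriv f) s)
    (hf3 : DifferentiableAt ℝ (deriv (deriv f)) s) (hf' : deriv f s ≠ 0) :
    HasDerivAt (fun t => -(deriv (deriv f) t / (2 * deriv f t)) * invSqrtAbsDeriv f t)
      (-(schwarzian f s / 2 * invSqrtAbsDeriv f s)) s := by
  have h2f' : 2 * deriv f s ≠ 0 := mul_ne_zero two_ne_zero hf'
  refine (((hf3.hasDerivAt.fun_div (hf2.hasDerivAt.const_mul 2) h2f').fun_neg).fun_mul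
    (hasDerivAt_invSqrtAbsDeriv hf2 hf')).congr_deriv ?_
  simp only [schwarzian]
  field_simp
  ring

lemma isHillSolution_invSqrtAbsDeriv
    (hf2 : ∀ s ∈ I, DifferentiableAt ℝ (deriv f) s)
    (hf3 : ∀ s ∈ I, DifferentiableAt ℝ (deriv (deriv f)) s)
    (hf' : ∀ s ∈ I, deriv f s ≠ 0) (hq : ∀ s ∈ I, schwarzian f s = 2 * q s) :
    IsHillSolution I q (invSqrtAbsDeriv f)
      (fun t => -(deriv (deriv f) t / (2 * deriv f t)) * invSqrtAbsDeriv f t) := by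
  intro s hs
  refine ⟨hasDerivAt_invSqrtAbsDeriv (hf2 s hs) (hf' s hs), ?_⟩
  convert hasDerivAt_deriv_invSqrtAbsDeriv (hf2 s hs) (hf3 s hs) (hf' s hs) using 3
  rw [hq s hs]
  ring

/-- The hypothesis `hfu` says that `f' u²` is constant. -/
lemma IsHillSolution.mul_left {u u' : ℝ → ℝ} (hu : IsHillSolution I q u u')
    (hf1 : ∀ s ∈ I, DifferentiableAt ℝ f s) (hf2 : ∀ s ∈ I, DifferentiableAt ℝ (deriv f) s)
    (hfu : ∀ s ∈ I, deriv (deriv f) s * u s + 2 * deriv f s * u' s = 0) :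
    IsHillSolution I q (fun t => f t * u t) (fun t => deriv f t * u t + f t * u' t) := by
  intro s hs
  obtain ⟨hu1, hu2⟩ := hu s hs
  refine ⟨(hf1 s hs).hasDerivAt.fun_mul hu1, ?_⟩
  refine (((hf2 s hs).hasDerivAt.fun_mul hu1).fun_add
    ((hf1 s hs).hasDerivAt.fun_mul hu2)).congr_deriv ?_
  linear_combination hfu s hs

lemma isHillSolution_mul_invSqrtAbsDeriv (hf1 : ∀ s ∈ I, DifferentiableAt ℝ f s)
    (hf2 : ∀ s ∈ I, DifferentiableAt ℝ (deriv f) s)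
    (hf3 : ∀ s ∈ I, DifferentiableAt ℝ (deriv (deriv f)) s)
    (hf' : ∀ s ∈ I, deriv f s ≠ 0) (hq : ∀ s ∈ I, schwarzian f s = 2 * q s) :
    IsHillSolution I q (fun t => f t * invSqrtAbsDeriv f t)
      (fun t => deriv f t * invSqrtAbsDeriv f t +
        f t * (-(deriv (deriv f) t / (2 * deriv f t)) * invSqrtAbsDeriv f t)) :=
  (isHillSolution_invSqrtAbsDeriv hf2 hf3 hf' hq).mul_left hf1 hf2 fun s hs => by
    field_simp [hf' s hs]
    ring

end

/-- Two solutions `f`, `g` of the same Schwarzian equation `S(·) = F` on an open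
interval `I` (three times differentiable, with nonvanishing first derivatives)
differ by post-composition with a homographic transformation. -/
theorem schwarzian_solutions_differ_by_homography (I : Set ℝ)
    (hIopen : IsOpen I) (hIord : I.OrdConnected)
    (F f g : ℝ → ℝ)
    (hf1 : ∀ s ∈ I, DifferentiableAt ℝ f s)
    (hf2 : ∀ s ∈ I, DifferentiableAt ℝ (deriv f) s)
    (hf3 : ∀ s ∈ I, DifferentiableAt ℝ (deriv (deriv f)) s)
    (hf' : ∀ s ∈ I, deriv f s ≠ 0)
    (hg1 : ∀ s ∈ I, DifferentiableAt ℝ g s)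
    (hg2 : ∀ s ∈ I, DifferentiableAt ℝ (deriv g) s)
    (hg3 : ∀ s ∈ I, DifferentiableAt ℝ (deriv (deriv g)) s)
    (hg' : ∀ s ∈ I, deriv g s ≠ 0)
    (hSf : ∀ s ∈ I, schwarzian f s = F s)
    (hSg : ∀ s ∈ I, schwarzian g s = F s) :
    ∃ a b c d : ℝ, a * d - b * c ≠ 0 ∧
      ∀ s ∈ I, c * f s + d ≠ 0 ∧ g s = (a * f s + b) / (c * f s + d) := by
  have hqf : ∀ s ∈ I, schwarzian f s = 2 * (F s / 2) := fun s hs => by rw [hSf s hs]; ring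
  have hqg : ∀ s ∈ I, schwarzian g s = 2 * (F s / 2) := fun s hs => by rw [hSg s hs]; ring
  have hu0 : ∀ s ∈ I, invSqrtAbsDeriv f s ≠ 0 := fun s hs => (invSqrtAbsDeriv_pos (hf' s hs)).ne'
  have hv0 : ∀ s ∈ I, invSqrtAbsDeriv g s ≠ 0 := fun s hs => (invSqrtAbsDeriv_pos (hg' s hs)).ne'
  obtain ⟨a, b, c, d, hdet, hhom⟩ := IsHillSolution.exists_div_eq_homography hIopen
    hIord.isPreconnected (isHillSolution_invSqrtAbsDeriv hf2 hf3 hf' hqf)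
    (isHillSolution_mul_invSqrtAbsDeriv hf1 hf2 hf3 hf' hqf)
    (isHillSolution_invSqrtAbsDeriv hg2 hg3 hg' hqg)
    (isHillSolution_mul_invSqrtAbsDeriv hg1 hg2 hg3 hg' hqg) hu0 hv0
    (fun s hs => by
      rw [wronskian_mul_left]; exact mul_ne_zero (hf' s hs) (pow_ne_zero 2 (hu0 s hs)))
    (fun s hs => by
      rw [wronskian_mul_left]; exact mul_ne_zero (hg' s hs) (pow_ne_zero 2 (hv0 s hs)))
  refine ⟨a, b, c, d, hdet, fun s hs => ?_⟩
  simpa only [mul_div_cancel_right₀ _ (hu0 s hs), mul_div_cancel_right₀ _ (hv0 s hs)]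
    using hhom s hs
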